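/- arXiv:0712.2913 — 2 statements merged into one kernel-verified Lean document; each statement's English description precedes it below -/
import Mathlib

section
/- Let F, G ∈ C_c^∞(ℝ^{2n}) with Hamiltonian flows (f_s)_{s∈ℝ} and (g_t)_{t∈ℝ}, and for s,t ∈ ℝ, τ ∈ [0,1], x ∈ ℝ^{2n} set L_{s,t}(x,τ) := s·F(x) − s·F(g_t^{−1}(f_{τs}^{−1}(x))) and K_{s,t}(x,τ) := L_{s,t}(x,τ) − s·t·{F,G}(x). Then ‖K_{s,t}‖ / (st) → 0 as s,t → 0⁺; precisely, for every ε > 0 there exists δ > 0 such that for all s,t with 0 < s < δ and 0 < t < δ, sup_{x∈ℝ^{2n}, τ∈[0,1]} |K_{s,t}(x,τ)| ≤ ε·s·t. -/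
/-! Write `y = f_{-τs} x`. Since `F` is conserved by its own flow, `F y = F x`, so
`K_{s,t}(x,τ) = -s · (F (g_{-t} y) - F y + t {F,G}(x))`. Along the flow of `G` the derivative of
`u ↦ F (g_u y)` is `{F,G}(g_u y)`, and for `|u| ≤ t` the point `g_u y` is within `C (s + t)`
of `x` because `X_F` and `X_G` are bounded. As `{F,G}` is compactly supported, hence uniformly
continuous, the mean value theorem bounds the bracket by `ε t` once `s, t` are small. -/

/-- The phase space `ℝ^{2n} = ℝ^n × ℝ^n` with coordinates `(p, q)`. -/
abbrev Phase (n : ℕ) := (Fin n → ℝ) × (Fin n → ℝ)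

/-- Partial derivative `∂F/∂p_i`. -/
noncomputable def pderivP {n : ℕ} (F : Phase n → ℝ) (i : Fin n) (x : Phase n) : ℝ :=
  fderiv ℝ F x (Pi.single i 1, 0)

/-- Partial derivative `∂F/∂q_i`. -/
noncomputable def pderivQ {n : ℕ} (F : Phase n → ℝ) (i : Fin n) (x : Phase n) : ℝ :=
  fderiv ℝ F x (0, Pi.single i 1)

/-- The standard Poisson bracket
`{F,G} = Σ i, (∂F/∂q_i · ∂G/∂p_i − ∂F/∂p_i · ∂G/∂q_i)`. -/
noncomputable def poisson {n : ℕ} (F G : Phase n → ℝ) (x : Phase n) : ℝ :=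
  ∑ i : Fin n, (pderivQ F i x * pderivP G i x - pderivP F i x * pderivQ G i x)

/-- `F ∈ C_c^∞(ℝ^{2n})`: smooth and compactly supported. -/
def SmoothCpt {n : ℕ} (F : Phase n → ℝ) : Prop :=
  ContDiff ℝ (⊤ : ℕ∞) F ∧ HasCompactSupport F

/-- The uniform (C⁰) norm `‖F‖ = sup_x |F x|`. -/
noncomputable def unif {n : ℕ} (F : Phase n → ℝ) : ℝ := ⨆ x, |F x|

/-- The Hamiltonian vector field `X_H = (−∂H/∂q, ∂H/∂p)`. -/
noncomputable def hamVF {n : ℕ} (H : Phase n → ℝ) (x : Phase n) : Phase n :=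
  (fun i => -(pderivQ H i x), fun i => pderivP H i x)

/-- `ψ` is the Hamiltonian flow of `H`: `ψ^0 = id`, the group (flow) law holds, and
`(d/dt) ψ^t x = X_H (ψ^t x)`. -/
def IsHamFlow {n : ℕ} (H : Phase n → ℝ) (ψ : ℝ → Phase n → Phase n) : Prop :=
  (∀ x, ψ 0 x = x) ∧ (∀ s t x, ψ (s + t) x = ψ s (ψ t x)) ∧
  (∀ x t, HasDerivAt (fun s => ψ s x) (hamVF H (ψ t x)) t)

section

variable {n : ℕ}

theorem Phase.eq_sum_single (v : Phase n) :
    v = ∑ i, (v.1 i • ((Pi.single i 1, 0) : Phase n) +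
      v.2 i • ((0, Pi.single i 1) : Phase n)) := by
  ext j <;> simp [Prod.fst_sum, Prod.snd_sum, Finset.sum_apply, Pi.single_apply]

theorem fderiv_apply_hamVF (F G : Phase n → ℝ) (x : Phase n) :
    fderiv ℝ F x (hamVF G x) = poisson F G x := by
  conv_lhs => rw [Phase.eq_sum_single (hamVF G x)]
  simp only [map_sum, map_add, map_smul, smul_eq_mul, poisson, hamVF, pderivP, pderivQ]
  exact Finset.sum_congr rfl fun i _ => by ring

theorem poisson_self (F : Phase n → ℝ) (x : Phase n) : poisson F F x = 0 :=
  Finset.sum_eq_zero fun i _ => by ring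

theorem norm_hamVF_le (H : Phase n → ℝ) (x : Phase n) :
    ‖hamVF H x‖ ≤ ‖fderiv ℝ H x‖ := by
  have hP : ∀ i, |pderivP H i x| ≤ ‖fderiv ℝ H x‖ := fun i => by
    simpa [pderivP, Pi.norm_single] using (fderiv ℝ H x).le_opNorm (Pi.single i 1, 0)
  have hQ : ∀ i, |pderivQ H i x| ≤ ‖fderiv ℝ H x‖ := fun i => by
    simpa [pderivQ, Pi.norm_single] using (fderiv ℝ H x).le_opNorm (0, Pi.single i 1)
  refine norm_prod_le_iff.2 ⟨?_, ?_⟩ <;>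
    refine (pi_norm_le_iff_of_nonneg (norm_nonneg _)).2 fun i => ?_
  · simpa [hamVF] using hQ i
  · simpa [hamVF] using hP i

theorem continuous_hamVF {H : Phase n → ℝ} (hH : ContDiff ℝ 1 H) : Continuous (hamVF H) := by
  have hd := hH.continuous_fderiv one_ne_zero
  exact (continuous_pi fun i => (hd.clm_apply continuous_const).neg).prodMk
    (continuous_pi fun i => hd.clm_apply continuous_const)

theorem exists_bound_hamVF {H : Phase n → ℝ} (hH : ContDiff ℝ 1 H)
    (hc : HasCompactSupport H) : ∃ C > 0, ∀ x, ‖hamVF H x‖ ≤ C := by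
  obtain ⟨C, hC⟩ :=
    hc.fderiv (𝕜 := ℝ).exists_bound_of_continuous (hH.continuous_fderiv one_ne_zero)
  exact ⟨max C 1, by positivity,
    fun x => (norm_hamVF_le H x).trans ((hC x).trans (le_max_left _ _))⟩

theorem uniformContinuous_poisson {F G : Phase n → ℝ} (hF : ContDiff ℝ 1 F)
    (hFc : HasCompactSupport F) (hG : ContDiff ℝ 1 G) : UniformContinuous (poisson F G) := by
  have hP : poisson F G = fun x => fderiv ℝ F x (hamVF G x) :=
    funext fun x => (fderiv_apply_hamVF F G x).symm
  have hcont : Continuous (poisson F G) :=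
    hP ▸ (hF.continuous_fderiv one_ne_zero).clm_apply (continuous_hamVF hG)
  refine ((hFc.fderiv (𝕜 := ℝ)).mono fun x hx => ?_).uniformContinuous_of_continuous hcont
  contrapose! hx
  simp [hP, Function.notMem_support.1 hx]

namespace IsHamFlow

variable {H : Phase n → ℝ} {ψ : ℝ → Phase n → Phase n}

theorem hasDerivAt_comp (hψ : IsHamFlow H ψ) {F : Phase n → ℝ} (hF : Differentiable ℝ F)
    (x : Phase n) (t : ℝ) : HasDerivAt (fun t => F (ψ t x)) (poisson F H (ψ t x)) t := by
  have h := (hF _).hasFDerivAt.comp_hasDerivAt t (hψ.2.2 x t)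
  rwa [fderiv_apply_hamVF] at h

theorem dist_le (hψ : IsHamFlow H ψ) {C : ℝ} (hC : ∀ z, ‖hamVF H z‖ ≤ C) (x : Phase n)
    (t : ℝ) : dist (ψ t x) x ≤ C * |t| := by
  simpa [hψ.1, dist_eq_norm] using Convex.norm_image_sub_le_of_norm_hasDerivWithin_le
    (fun u _ => (hψ.2.2 x u).hasDerivWithinAt) (fun u _ => hC _) convex_univ
    (Set.mem_univ 0) (Set.mem_univ t)

theorem dist_comp_le (hψ : IsHamFlow H ψ) {K : Phase n → ℝ} {φ : ℝ → Phase n → Phase n}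
    (hφ : IsHamFlow K φ) {C : ℝ} (hH : ∀ z, ‖hamVF H z‖ ≤ C)
    (hK : ∀ z, ‖hamVF K z‖ ≤ C) (x : Phase n) (u v : ℝ) :
    dist (ψ u (φ v x)) x ≤ C * (|u| + |v|) :=
  calc dist (ψ u (φ v x)) x
      ≤ dist (ψ u (φ v x)) (φ v x) + dist (φ v x) x := dist_triangle _ _ _
    _ ≤ C * |u| + C * |v| := add_le_add (hψ.dist_le hH _ _) (hφ.dist_le hK _ _)
    _ = C * (|u| + |v|) := (mul_add _ _ _).symm

theorem abs_comp_sub_sub_mul_le (hψ : IsHamFlow H ψ) {F : Phase n → ℝ}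
    (hF : Differentiable ℝ F) {x : Phase n} {t c ε : ℝ}
    (hε : ∀ u ∈ Set.uIcc 0 t, |poisson F H (ψ u x) - c| ≤ ε) :
    |F (ψ t x) - F x - t * c| ≤ ε * |t| := by
  have hderiv (u : ℝ) :
      HasDerivAt (fun u => F (ψ u x) - u * c) (poisson F H (ψ u x) - c) u :=
    (hψ.hasDerivAt_comp hF x u).sub (by simpa using (hasDerivAt_id u).mul_const c)
  have := Convex.norm_image_sub_le_of_norm_hasDerivWithin_le
    (fun u _ => (hderiv u).hasDerivWithinAt) hε (convex_uIcc 0 t)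
    Set.left_mem_uIcc Set.right_mem_uIcc
  simpa [hψ.1, sub_right_comm] using this

theorem hamiltonian_comp_eq (hψ : IsHamFlow H ψ) (hH : Differentiable ℝ H) (x : Phase n)
    (t : ℝ) : H (ψ t x) = H x := by
  have := hψ.abs_comp_sub_sub_mul_le hH (x := x) (t := t) (c := 0) (ε := 0)
    (fun u _ => by simp [poisson_self])
  simpa [sub_eq_zero] using this

end IsHamFlow

end

/-- With `L_{s,t}(x,τ) = s·F(x) − s·F(g_t^{−1}(f_{τs}^{−1}(x)))` and
`K_{s,t}(x,τ) = L_{s,t}(x,τ) − s·t·{F,G}(x)`, one has `‖K_{s,t}‖/(st) → 0` as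
`s,t → 0⁺`: for every `ε > 0` there is `δ > 0` such that for all `0 < s < δ`,
`0 < t < δ`, all `x` and all `τ ∈ [0,1]`, `|K_{s,t}(x,τ)| ≤ ε·s·t`. -/
theorem remainder_K_small (n : ℕ) (F G : Phase n → ℝ)
    (hF : SmoothCpt F) (hG : SmoothCpt G)
    (f g : ℝ → Phase n → Phase n)
    (hf : IsHamFlow F f) (hg : IsHamFlow G g) :
    ∀ ε > (0 : ℝ), ∃ δ > (0 : ℝ), ∀ s t : ℝ,
      0 < s → s < δ → 0 < t → t < δ →
      ∀ (x : Phase n) (τ : ℝ), τ ∈ Set.Icc (0 : ℝ) 1 →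
        |s * F x - s * F (g (-t) (f (-(τ * s)) x)) - s * t * poisson F G x|
          ≤ ε * s * t := by
  intro ε hε
  have hF1 : ContDiff ℝ 1 F := hF.1.of_le (by simp)
  have hG1 : ContDiff ℝ 1 G := hG.1.of_le (by simp)
  have hFd : Differentiable ℝ F := hF1.differentiable one_ne_zero
  obtain ⟨CF, hCF, hFC⟩ := exists_bound_hamVF hF1 hF.2
  obtain ⟨CG, -, hGC⟩ := exists_bound_hamVF hG1 hG.2
  set C := max CF CG
  have hC : 0 < C := lt_max_of_lt_left hCF
  obtain ⟨η, hη, hP⟩ :=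
    Metric.uniformContinuous_iff.1 (uniformContinuous_poisson hF1 hF.2 hG1) ε hε
  refine ⟨η / (2 * C), by positivity, fun s t hs hsδ ht htδ x τ hτ => ?_⟩
  have hτs : |-(τ * s)| ≤ s := by
    rw [abs_neg, abs_of_nonneg (mul_nonneg hτ.1 hs.le)]
    exact mul_le_of_le_one_left hs.le hτ.2
  have hclose : ∀ u ∈ Set.uIcc 0 (-t),
      |poisson F G (g u (f (-(τ * s)) x)) - poisson F G x| ≤ ε := by
    intro u hu
    rw [Set.uIcc_of_ge (by linarith)] at hu
    refine (Real.dist_eq _ _ ▸ hP ?_).le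
    calc dist (g u (f (-(τ * s)) x)) x
        ≤ C * (|u| + |-(τ * s)|) :=
          hg.dist_comp_le hf (fun z => (hGC z).trans (le_max_right _ _))
            (fun z => (hFC z).trans (le_max_left _ _)) x u _
      _ ≤ C * (t + s) := by gcongr; exact abs_le.2 ⟨hu.1, by linarith [hu.2]⟩
      _ < C * (2 * (η / (2 * C))) := by gcongr; linarith
      _ = η := by field_simp
  have key := hg.abs_comp_sub_sub_mul_le hFd hclose
  rw [hf.hamiltonian_comp_eq hFd, abs_neg, abs_of_pos ht] at key
  set y := f (-(τ * s)) x
  calc _ = |s * (F (g (-t) y) - F x - -t * poisson F G x)| := by rw [← abs_neg]; ring_nf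
    _ = s * |F (g (-t) y) - F x - -t * poisson F G x| := by rw [abs_mul, abs_of_pos hs]
    _ ≤ s * (ε * t) := by gcongr
    _ = ε * s * t := by ring
end

section
/- (Tamed approximation in dimension two.) For any three functions F_1, F_2, F_3 ∈ C_c^∞(ℝ²) and any ε > 0, there exist F'_1, F'_2, F'_3 ∈ C_c^∞(ℝ²) with ‖F'_i − F_i‖ < ε for i = 1,2,3 such that every point x ∈ ℝ² has an open neighborhood on which at least one of the functions F'_1, F'_2, F'_3 is constant. In particular, {F'_1, {F'_2, F'_3}} ≡ 0. -/
/-! ### Auxiliary: a smooth staircase function on `ℝ` -/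

/-- A smooth staircase: `psi` is smooth, stays within distance 1 of the identity,
and is locally constant (equal to `k`) on each interval `(k - 1/4, k + 1/2)`. -/
noncomputable def psi (t : ℝ) : ℝ :=
  ⌊t⌋ + Real.smoothTransition (4 * Int.fract t - 2)

lemma psi_eq_on (k : ℤ) (s : ℝ) (h1 : (k : ℝ) - 4⁻¹ < s) (h2 : s < k + 2⁻¹) :
    psi s = k := by
  unfold psi
  rcases le_or_gt (k : ℝ) s with h | h
  · have hf : ⌊s⌋ = k := by
      rw [Int.floor_eq_iff]
      constructor
      · exact h
      · push_cast; linarith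
    rw [Int.fract, hf]
    rw [Real.smoothTransition.zero_of_nonpos (by linarith)]
    ring
  · have hf : ⌊s⌋ = k - 1 := by
      rw [Int.floor_eq_iff]
      constructor
      · push_cast; linarith
      · push_cast; linarith
    rw [Int.fract, hf]
    rw [Real.smoothTransition.one_of_one_le (by push_cast; linarith)]
    push_cast; ring

lemma psi_smooth : ContDiff ℝ (⊤ : ℕ∞) psi := by
  rw [contDiff_iff_contDiffAt]
  intro t
  rcases eq_or_ne (Int.fract t) 0 with h | h
  · set k := ⌊t⌋ with hk
    have ht : t = (k : ℝ) := by
      have := Int.fract_add_floor t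
      rw [h] at this; simpa using this.symm
    have hmem : Set.Ioo ((k : ℝ) - 4⁻¹) ((k : ℝ) + 2⁻¹) ∈ nhds t := by
      apply Ioo_mem_nhds <;> rw [ht] <;> norm_num
    apply ContDiffAt.congr_of_eventuallyEq (contDiffAt_const (c := (k : ℝ)))
    filter_upwards [hmem] with s hs
    exact psi_eq_on k s hs.1 hs.2
  · set k := ⌊t⌋ with hk
    have h0 : 0 < Int.fract t := lt_of_le_of_ne (Int.fract_nonneg t) (Ne.symm h)
    have h1 : Int.fract t < 1 := Int.fract_lt_one t
    have hmem : Set.Ioo ((k : ℝ)) ((k : ℝ) + 1) ∈ nhds t := by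
      apply Ioo_mem_nhds
      · nlinarith [Int.fract_add_floor t]
      · nlinarith [Int.fract_add_floor t]
    have hsmooth : ContDiffAt ℝ (⊤ : ℕ∞)
        (fun s => (k : ℝ) + Real.smoothTransition (4 * (s - k) - 2)) t := by
      apply ContDiffAt.add contDiffAt_const
      exact Real.smoothTransition.contDiffAt.comp t (by fun_prop)
    apply ContDiffAt.congr_of_eventuallyEq hsmooth
    filter_upwards [hmem] with s hs
    have hf : ⌊s⌋ = k := by
      rw [Int.floor_eq_iff]
      exact ⟨le_of_lt hs.1, hs.2⟩
    unfold psi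
    rw [Int.fract, hf]

lemma psi_close (t : ℝ) : |psi t - t| ≤ 1 := by
  have h1 := Int.floor_le t
  have h2 := Int.lt_floor_add_one t
  have h3 := Real.smoothTransition.nonneg (4 * Int.fract t - 2)
  have h4 := Real.smoothTransition.le_one (4 * Int.fract t - 2)
  rw [abs_le]; unfold psi; constructor <;> linarith

/-! ### Flat points of the three shifted staircases -/

/-- `u` lies in an interval on which the `j`-th shifted staircase is constant. -/
def Flat (j : ℕ) (u : ℝ) : Prop :=
  ∃ k : ℤ, (k : ℝ) - 4⁻¹ < u - j / 3 ∧ u - j / 3 < k + 2⁻¹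

/-- `u` lies in the (small) bad set of the `j`-th shifted staircase. -/
def Bad (j : ℕ) (u : ℝ) : Prop :=
  2⁻¹ ≤ Int.fract (u - j / 3) ∧ Int.fract (u - j / 3) ≤ 3 / 4

lemma flat_aux (s : ℝ) (h : ¬ (2⁻¹ ≤ Int.fract s ∧ Int.fract s ≤ 3 / 4)) :
    ∃ k : ℤ, (k : ℝ) - 4⁻¹ < s ∧ s < k + 2⁻¹ := by
  have hfl := Int.floor_le s
  have hfu := Int.lt_floor_add_one s
  rw [not_and_or] at h
  rcases h with h | h
  · push_neg at h
    rw [Int.fract] at h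
    exact ⟨⌊s⌋, by constructor <;> linarith⟩
  · push_neg at h
    rw [Int.fract] at h
    refine ⟨⌊s⌋ + 1, ?_, ?_⟩ <;> push_cast <;> linarith

lemma flat_of_not_bad (j : ℕ) (u : ℝ) (h : ¬ Bad j u) : Flat j u :=
  flat_aux (u - j / 3) h

lemma bad_unique (j j' : ℕ) (u : ℝ) (hlt : j < j') (hle : j' ≤ 2)
    (hb : Bad j u) (hb' : Bad j' u) : False := by
  obtain ⟨h1, h2⟩ := hb
  obtain ⟨h3, h4⟩ := hb'
  rw [Int.fract] at h1 h2 h3 h4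
  set m := ⌊u - j / 3⌋
  set m' := ⌊u - j' / 3⌋
  have hj : (j : ℝ) + 1 ≤ (j' : ℝ) := by exact_mod_cast Nat.succ_le_of_lt hlt
  have hj2 : (j' : ℝ) - j ≤ 2 := by
    have h5 : (j' : ℝ) ≤ 2 := by exact_mod_cast hle
    have h6 : (0 : ℝ) ≤ j := Nat.cast_nonneg j
    linarith
  have hlo : (0 : ℝ) < (m : ℝ) - m' := by linarith
  have hhi : ((m : ℝ) - m') < 1 := by linarith
  have h7 : (0 : ℤ) < m - m' := by exact_mod_cast hlo
  have h8 : m - m' < 1 := by exact_mod_cast hhi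
  omega

/-- At every point, at least two of the three shifted staircases are flat. -/
lemma flat_two (u : ℝ) :
    ∃ j1 j2 : ℕ, j1 < j2 ∧ j2 < 3 ∧ Flat j1 u ∧ Flat j2 u := by
  by_cases b0 : Bad 0 u
  · refine ⟨1, 2, by omega, by omega, ?_, ?_⟩
    · exact flat_of_not_bad 1 u fun b1 => bad_unique 0 1 u (by omega) (by omega) b0 b1
    · exact flat_of_not_bad 2 u fun b2 => bad_unique 0 2 u (by omega) (by omega) b0 b2
  by_cases b1 : Bad 1 u
  · refine ⟨0, 2, by omega, by omega, flat_of_not_bad 0 u b0, ?_⟩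
    exact flat_of_not_bad 2 u fun b2 => bad_unique 1 2 u (by omega) (by omega) b1 b2
  exact ⟨0, 1, by omega, by omega, flat_of_not_bad 0 u b0, flat_of_not_bad 1 u b1⟩

/-! ### Rescaled staircases -/

noncomputable def stair (l : ℝ) (j : ℕ) (t : ℝ) : ℝ := l * psi (t / l - j / 3)

lemma stair_smooth (l : ℝ) (hl : l ≠ 0) (j : ℕ) : ContDiff ℝ (⊤ : ℕ∞) (stair l j) := by
  unfold stair
  exact contDiff_const.mul (psi_smooth.comp ((contDiff_id.div_const l).sub contDiff_const))

lemma stair_close (l : ℝ) (hl : 0 < l) (j : ℕ) (hj : j ≤ 2) (t : ℝ) :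
    |stair l j t - t| ≤ 2 * l := by
  have h := psi_close (t / l - j / 3)
  rw [abs_le] at h ⊢
  have ht : l * (t / l) = t := by field_simp
  have hj' : (j : ℝ) ≤ 2 := by exact_mod_cast hj
  have hj0 : (0 : ℝ) ≤ j := Nat.cast_nonneg j
  unfold stair
  constructor <;> nlinarith [h.1, h.2]

lemma stair_const (l : ℝ) (hl : 0 < l) (j : ℕ) (t : ℝ) (h : Flat j (t / l)) :
    ∃ a b c : ℝ, a < t ∧ t < b ∧ ∀ s, a < s → s < b → stair l j s = c := by
  obtain ⟨k, h1, h2⟩ := h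
  refine ⟨l * ((k : ℝ) - 4⁻¹ + j / 3), l * ((k : ℝ) + 2⁻¹ + j / 3), l * k, ?_, ?_, ?_⟩
  · rw [← lt_div_iff₀' hl]; linarith
  · rw [← div_lt_iff₀' hl]; linarith
  · intro s hs1 hs2
    rw [← lt_div_iff₀' hl] at hs1
    rw [← div_lt_iff₀' hl] at hs2
    unfold stair
    rw [psi_eq_on k (s / l - j / 3) (by linarith) (by linarith)]

/-! ### The perturbation maps on phase space -/

/-- The perturbation map: apply the `j`-th staircase to both coordinates. -/
noncomputable def phi (l : ℝ) (j : ℕ) (x : Phase 1) : Phase 1 :=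
  (fun _ => stair l j (x.1 0), fun _ => stair l j (x.2 0))

lemma phi_smooth (l : ℝ) (hl : l ≠ 0) (j : ℕ) : ContDiff ℝ (⊤ : ℕ∞) (phi l j) := by
  unfold phi
  apply ContDiff.prodMk <;> apply contDiff_pi.2 <;> intro i <;>
    exact (stair_smooth l hl j).comp (by fun_prop)

lemma phi_dist (l : ℝ) (hl : 0 < l) (j : ℕ) (hj : j ≤ 2) (x : Phase 1) :
    dist (phi l j x) x ≤ 2 * l := by
  have h2l : (0:ℝ) ≤ 2 * l := by linarith
  rw [Prod.dist_eq]
  apply max_le <;> rw [dist_pi_le_iff h2l] <;> intro i <;>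
    rw [Subsingleton.elim i 0] <;> rw [Real.dist_eq] <;>
    exact stair_close l hl j hj _

lemma comp_smoothCpt (F : Phase 1 → ℝ) (hF : SmoothCpt F) (l : ℝ) (hl : 0 < l)
    (j : ℕ) (hj : j ≤ 2) : SmoothCpt (F ∘ phi l j) := by
  constructor
  · exact hF.1.comp (phi_smooth l hl.ne' j)
  · obtain ⟨R, hR⟩ := hF.2.isCompact.isBounded.subset_closedBall 0
    have hsub : tsupport (F ∘ phi l j) ⊆ Metric.closedBall 0 (R + 2 * l) := by
      apply closure_minimal
      · intro x hx
        have hx' : phi l j x ∈ tsupport F := by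
          apply subset_tsupport
          simpa [Function.support, Function.comp] using hx
        have h1 : dist (phi l j x) 0 ≤ R := hR hx'
        have h2 := phi_dist l hl j hj x
        simp only [Metric.mem_closedBall] at *
        calc dist x 0 ≤ dist x (phi l j x) + dist (phi l j x) 0 := dist_triangle _ _ _
          _ ≤ 2 * l + R := by rw [dist_comm]; linarith
          _ = R + 2 * l := by ring
      · exact Metric.isClosed_closedBall
    exact (isCompact_closedBall 0 (R + 2 * l)).of_isClosed_subset (isClosed_tsupport _) hsub

lemma unif_lt (F G : Phase 1 → ℝ) (ε b : ℝ) (hb : 0 ≤ b) (hbe : b < ε)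
    (h : ∀ x, |G x - F x| ≤ b) : unif (fun x => G x - F x) < ε :=
  lt_of_le_of_lt (Real.iSup_le (fun x => h x) hb) hbe

/-! ### Poisson bracket vanishing from local constancy -/

lemma fderiv_zero_of_const_on {f : Phase 1 → ℝ} {U : Set (Phase 1)} {x : Phase 1}
    (hU : IsOpen U) (hx : x ∈ U) (c : ℝ) (h : ∀ y ∈ U, f y = c) :
    fderiv ℝ f x = 0 := by
  have he : f =ᶠ[nhds x] fun _ => c := Filter.eventually_of_mem (hU.mem_nhds hx) h
  rw [he.fderiv_eq, fderiv_const_apply]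

lemma poisson_zero_left {f g : Phase 1 → ℝ} {x : Phase 1}
    (hf : fderiv ℝ f x = 0) : poisson f g x = 0 := by
  simp [poisson, pderivP, pderivQ, hf]

lemma poisson_zero_right {f g : Phase 1 → ℝ} {x : Phase 1}
    (hg : fderiv ℝ g x = 0) : poisson f g x = 0 := by
  simp [poisson, pderivP, pderivQ, hg]

lemma poisson_vanish (F₁' F₂' F₃' : Phase 1 → ℝ)
    (h : ∀ x : Phase 1, ∃ U : Set (Phase 1), IsOpen U ∧ x ∈ U ∧
        ((∃ c, ∀ y ∈ U, F₁' y = c) ∨ (∃ c, ∀ y ∈ U, F₂' y = c) ∨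
          (∃ c, ∀ y ∈ U, F₃' y = c))) :
    ∀ x, poisson F₁' (poisson F₂' F₃') x = 0 := by
  intro x
  obtain ⟨U, hU, hxU, hc⟩ := h x
  rcases hc with ⟨c, hc⟩ | ⟨c, hc⟩ | ⟨c, hc⟩
  · exact poisson_zero_left (fderiv_zero_of_const_on hU hxU c hc)
  · apply poisson_zero_right
    apply fderiv_zero_of_const_on hU hxU 0
    intro y hy
    exact poisson_zero_left (fderiv_zero_of_const_on hU hy c hc)
  · apply poisson_zero_right
    apply fderiv_zero_of_const_on hU hxU 0
    intro y hy
    exact poisson_zero_right (fderiv_zero_of_const_on hU hy c hc)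

lemma common_index {P Q : ℕ → Prop}
    (hP : ∃ j1 j2, j1 < j2 ∧ j2 < 3 ∧ P j1 ∧ P j2)
    (hQ : ∃ j1 j2, j1 < j2 ∧ j2 < 3 ∧ Q j1 ∧ Q j2) :
    ∃ j, j < 3 ∧ P j ∧ Q j := by
  obtain ⟨a, b, hab, hb3, hPa, hPb⟩ := hP
  obtain ⟨c, d, hcd, hd3, hQc, hQd⟩ := hQ
  interval_cases b <;> interval_cases a <;> interval_cases d <;> interval_cases c <;>
    first
      | exact ⟨0, by omega, by assumption, by assumption⟩
      | exact ⟨1, by omega, by assumption, by assumption⟩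
      | exact ⟨2, by omega, by assumption, by assumption⟩

/-- Helper: closeness of the perturbed function. -/
lemma close_bound (F : Phase 1 → ℝ) (hF : SmoothCpt F) (ε : ℝ) (hε : 0 < ε) :
    ∃ δ > 0, ∀ l, 0 < l → 2 * l < δ → ∀ j ≤ 2, ∀ x : Phase 1,
      |F (phi l j x) - F x| ≤ ε / 2 := by
  have hu : UniformContinuous F :=
    hF.2.uniformContinuous_of_continuous hF.1.continuous
  rw [Metric.uniformContinuous_iff] at hu
  obtain ⟨δ, hδ, hd⟩ := hu (ε / 2) (by linarith)
  refine ⟨δ, hδ, fun l hl hld j hj x => ?_⟩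
  have h1 : dist (phi l j x) x < δ := lt_of_le_of_lt (phi_dist l hl j hj x) hld
  have := hd h1
  rw [Real.dist_eq] at this
  linarith [le_of_lt this]

/-- Helper: local constancy of `F ∘ phi l j` near a point where both coordinates are flat. -/
lemma local_const (F : Phase 1 → ℝ) (l : ℝ) (hl : 0 < l) (j : ℕ) (x : Phase 1)
    (hp : Flat j (x.1 0 / l)) (hq : Flat j (x.2 0 / l)) :
    ∃ U : Set (Phase 1), IsOpen U ∧ x ∈ U ∧ ∃ c, ∀ y ∈ U, (F ∘ phi l j) y = c := by
  obtain ⟨a, b, c, hap, hpb, hcon⟩ := stair_const l hl j (x.1 0) hp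
  obtain ⟨a', b', c', haq, hqb, hcon'⟩ := stair_const l hl j (x.2 0) hq
  refine ⟨{y : Phase 1 | y.1 0 ∈ Set.Ioo a b ∧ y.2 0 ∈ Set.Ioo a' b'}, ?_, ?_, ?_⟩
  · apply IsOpen.inter
    · exact isOpen_Ioo.preimage (by fun_prop)
    · exact isOpen_Ioo.preimage (by fun_prop)
  · exact ⟨⟨hap, hpb⟩, ⟨haq, hqb⟩⟩
  · refine ⟨F ((fun _ => c), (fun _ => c')), fun y hy => ?_⟩
    have e1 : stair l j (y.1 0) = c := hcon _ hy.1.1 hy.1.2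
    have e2 : stair l j (y.2 0) = c' := hcon' _ hy.2.1 hy.2.2
    simp only [Function.comp_apply, phi, e1, e2]

/-- **Tamed approximation in dimension two.** Any three functions in `C_c^∞(ℝ²)` admit
arbitrarily uniformly-close smooth compactly supported perturbations such that near every
point of `ℝ²` at least one of the perturbed functions is locally constant; in particular
the triple Poisson bracket of the perturbations vanishes identically. Here `ℝ² = Phase 1`. -/
theorem tamed_approximation_dim_two (F₁ F₂ F₃ : Phase 1 → ℝ)
    (h₁ : SmoothCpt F₁) (h₂ : SmoothCpt F₂) (h₃ : SmoothCpt F₃)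
    (ε : ℝ) (hε : 0 < ε) :
    ∃ F₁' F₂' F₃' : Phase 1 → ℝ,
      SmoothCpt F₁' ∧ SmoothCpt F₂' ∧ SmoothCpt F₃' ∧
      unif (fun x => F₁' x - F₁ x) < ε ∧
      unif (fun x => F₂' x - F₂ x) < ε ∧
      unif (fun x => F₃' x - F₃ x) < ε ∧
      (∀ x : Phase 1, ∃ U : Set (Phase 1), IsOpen U ∧ x ∈ U ∧
        ((∃ c, ∀ y ∈ U, F₁' y = c) ∨ (∃ c, ∀ y ∈ U, F₂' y = c) ∨
          (∃ c, ∀ y ∈ U, F₃' y = c))) ∧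
      ∀ x, poisson F₁' (poisson F₂' F₃') x = 0 := by
  obtain ⟨δ₁, hδ₁, hc₁⟩ := close_bound F₁ h₁ ε hε
  obtain ⟨δ₂, hδ₂, hc₂⟩ := close_bound F₂ h₂ ε hε
  obtain ⟨δ₃, hδ₃, hc₃⟩ := close_bound F₃ h₃ ε hε
  set l : ℝ := min δ₁ (min δ₂ δ₃) / 5 with hldef
  have hl : 0 < l := by
    apply div_pos _ (by norm_num)
    exact lt_min hδ₁ (lt_min hδ₂ hδ₃)
  have hl1 : 2 * l < δ₁ := by
    have := min_le_left δ₁ (min δ₂ δ₃); rw [hldef]; linarith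
  have hl2 : 2 * l < δ₂ := by
    have h5 := min_le_right δ₁ (min δ₂ δ₃)
    have h6 := min_le_left δ₂ δ₃; rw [hldef]; linarith
  have hl3 : 2 * l < δ₃ := by
    have h5 := min_le_right δ₁ (min δ₂ δ₃)
    have h6 := min_le_right δ₂ δ₃; rw [hldef]; linarith
  refine ⟨F₁ ∘ phi l 0, F₂ ∘ phi l 1, F₃ ∘ phi l 2,
    comp_smoothCpt F₁ h₁ l hl 0 (by omega),
    comp_smoothCpt F₂ h₂ l hl 1 (by omega),
    comp_smoothCpt F₃ h₃ l hl 2 (by omega),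
    unif_lt _ _ ε (ε/2) (by linarith) (by linarith)
      (fun x => hc₁ l hl hl1 0 (by omega) x),
    unif_lt _ _ ε (ε/2) (by linarith) (by linarith)
      (fun x => hc₂ l hl hl2 1 (by omega) x),
    unif_lt _ _ ε (ε/2) (by linarith) (by linarith)
      (fun x => hc₃ l hl hl3 2 (by omega) x), ?_⟩
  have hcover : ∀ x : Phase 1, ∃ U : Set (Phase 1), IsOpen U ∧ x ∈ U ∧
      ((∃ c, ∀ y ∈ U, (F₁ ∘ phi l 0) y = c) ∨ (∃ c, ∀ y ∈ U, (F₂ ∘ phi l 1) y = c) ∨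
        (∃ c, ∀ y ∈ U, (F₃ ∘ phi l 2) y = c)) := by
    intro x
    obtain ⟨j, hj3, hfp, hfq⟩ :=
      common_index (flat_two (x.1 0 / l)) (flat_two (x.2 0 / l))
    interval_cases j
    · obtain ⟨U, hU, hxU, hc⟩ := local_const F₁ l hl 0 x hfp hfq
      exact ⟨U, hU, hxU, Or.inl hc⟩
    · obtain ⟨U, hU, hxU, hc⟩ := local_const F₂ l hl 1 x hfp hfq
      exact ⟨U, hU, hxU, Or.inr (Or.inl hc)⟩
    · obtain ⟨U, hU, hxU, hc⟩ := local_const F₃ l hl 2 x hfp hfq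
      exact ⟨U, hU, hxU, Or.inr (Or.inr hc)⟩
  exact ⟨hcover, poisson_vanish _ _ _ hcover⟩
end
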